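/- Let n be a positive integer, M an n×n real symmetric matrix, and Z an n×n real skew-symmetric matrix. Then every eigenvalue μ of M + Z satisfies λmin(M) ≤ Re(μ) ≤ λmax(M). -/

import Mathlib

/-!
If `(M + Z) v = μ v` with `v ≠ 0`, take real parts in `v* (M + Z) v = μ ‖v‖²`. Since `Z` is real
and skew-symmetric, `v* Z v` is purely imaginary, so `Re μ ‖v‖² = Re (v* M v)`, and the Rayleigh
quotient of the symmetric matrix `M` lies between its extreme eigenvalues.
-/

open Matrix

/-- Smallest eigenvalue of a Hermitian (real symmetric) matrix. -/
noncomputable def lamMin {n : Type*} [Fintype n] [DecidableEq n] {A : Matrix n n ℝ}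
    (hA : A.IsHermitian) : ℝ := ⨅ i, hA.eigenvalues i

/-- Largest eigenvalue of a Hermitian (real symmetric) matrix. -/
noncomputable def lamMax {n : Type*} [Fintype n] [DecidableEq n] {A : Matrix n n ℝ}
    (hA : A.IsHermitian) : ℝ := ⨆ i, hA.eigenvalues i

open scoped ComplexOrder

namespace Matrix

variable {n 𝕜 : Type*} [Fintype n] [RCLike 𝕜]

lemma PosSemidef.map_algebraMap {A : Matrix n n ℝ} (hA : A.PosSemidef) :
    (A.map (algebraMap ℝ 𝕜)).PosSemidef := by
  classical
  open scoped MatrixOrder in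
  obtain ⟨B, rfl⟩ := CStarAlgebra.nonneg_iff_eq_star_mul_self.mp hA.nonneg
  rw [Matrix.map_mul, star_eq_conjTranspose, conjTranspose_map _ (fun _ => by simp)]
  exact posSemidef_conjTranspose_mul_self _

lemma re_star_dotProduct_mulVec_self_eq_zero {B : Matrix n n 𝕜} (hB : Bᴴ = -B) (x : n → 𝕜) :
    RCLike.re (star x ⬝ᵥ B *ᵥ x) = 0 := by
  have h : star (star x ⬝ᵥ B *ᵥ x) = star x ⬝ᵥ Bᴴ *ᵥ x := by
    rw [star_dotProduct, star_star, star_mulVec, dotProduct_mulVec]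
  rw [hB, neg_mulVec, dotProduct_neg] at h
  have := congrArg RCLike.re h
  simp only [RCLike.star_def, RCLike.conj_re, map_neg] at this
  linarith

variable [DecidableEq n]

lemma IsHermitian.posSemidef_sub_smul_one {A : Matrix n n 𝕜} (hA : A.IsHermitian) {c : ℝ}
    (hc : ∀ i, c ≤ hA.eigenvalues i) : (A - c • 1).PosSemidef := by
  open scoped MatrixOrder in
  rw [← nonneg_iff_posSemidef, sub_nonneg, ← Algebra.algebraMap_eq_smul_one,
    algebraMap_le_iff_le_spectrum hA.isSelfAdjoint, hA.spectrum_real_eq_range_eigenvalues]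
  rintro _ ⟨i, rfl⟩
  exact hc i

lemma IsHermitian.posSemidef_smul_one_sub {A : Matrix n n 𝕜} (hA : A.IsHermitian) {c : ℝ}
    (hc : ∀ i, hA.eigenvalues i ≤ c) : (c • 1 - A).PosSemidef := by
  open scoped MatrixOrder in
  rw [← nonneg_iff_posSemidef, sub_nonneg, ← Algebra.algebraMap_eq_smul_one,
    le_algebraMap_iff_spectrum_le hA.isSelfAdjoint, hA.spectrum_real_eq_range_eigenvalues]
  rintro _ ⟨i, rfl⟩
  exact hc i

lemma IsHermitian.le_re_star_dotProduct_map_mulVec {A : Matrix n n ℝ} (hA : A.IsHermitian)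
    {c : ℝ} (hc : ∀ i, c ≤ hA.eigenvalues i) (v : n → 𝕜) :
    c * RCLike.re (star v ⬝ᵥ v) ≤ RCLike.re (star v ⬝ᵥ A.map (algebraMap ℝ 𝕜) *ᵥ v) := by
  have h := (hA.posSemidef_sub_smul_one hc).map_algebraMap.re_dotProduct_nonneg v
  rw [Matrix.map_sub _ (map_sub _), Matrix.map_smul _ _ (fun a => by simp [Algebra.smul_def]),
    Matrix.map_one _ (map_zero _) (map_one _)] at h
  simp only [sub_mulVec, smul_mulVec, one_mulVec, dotProduct_sub, dotProduct_smul, map_sub,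
    RCLike.smul_re] at h
  linarith

lemma IsHermitian.re_star_dotProduct_map_mulVec_le {A : Matrix n n ℝ} (hA : A.IsHermitian)
    {c : ℝ} (hc : ∀ i, hA.eigenvalues i ≤ c) (v : n → 𝕜) :
    RCLike.re (star v ⬝ᵥ A.map (algebraMap ℝ 𝕜) *ᵥ v) ≤ c * RCLike.re (star v ⬝ᵥ v) := by
  have h := (hA.posSemidef_smul_one_sub hc).map_algebraMap.re_dotProduct_nonneg v
  rw [Matrix.map_sub _ (map_sub _), Matrix.map_smul _ _ (fun a => by simp [Algebra.smul_def]),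
    Matrix.map_one _ (map_zero _) (map_one _)] at h
  simp only [sub_mulVec, smul_mulVec, one_mulVec, dotProduct_sub, dotProduct_smul, map_sub,
    RCLike.smul_re] at h
  linarith

lemma exists_mulVec_eq_smul_of_mem_spectrum {K : Type*} [Field K] {A : Matrix n n K} {μ : K}
    (h : μ ∈ spectrum K A) : ∃ v ≠ 0, A *ᵥ v = μ • v := by
  rw [← spectrum_toLin', ← Module.End.hasEigenvalue_iff_mem_spectrum] at h
  obtain ⟨v, hv⟩ := h.exists_hasEigenvector
  exact ⟨v, hv.2, by simpa using hv.apply_eq_smul⟩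

end Matrix

theorem stmt13_general {n : ℕ}
    (M Z : Matrix (Fin n) (Fin n) ℝ)
    (hM : M.IsHermitian) (hZ : Zᵀ = -Z) :
    ∀ μ ∈ spectrum ℂ ((M + Z).map (algebraMap ℝ ℂ)),
      lamMin hM ≤ μ.re ∧ μ.re ≤ lamMax hM := by
  intro μ hμ
  obtain ⟨v, hv0, hv⟩ := exists_mulVec_eq_smul_of_mem_spectrum hμ
  have hZc : (Z.map (algebraMap ℝ ℂ))ᴴ = -Z.map (algebraMap ℝ ℂ) := by
    rw [← conjTranspose_map _ (fun _ => by simp), conjTranspose_eq_transpose_of_trivial, hZ,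
      Matrix.map_neg _ (map_neg _)]
  obtain ⟨hnorm_pos, hnorm_im⟩ := Complex.pos_iff.mp (dotProduct_star_self_pos_iff.mpr hv0)
  have hquad : (star v ⬝ᵥ M.map (algebraMap ℝ ℂ) *ᵥ v).re = μ.re * (star v ⬝ᵥ v).re := by
    have h := congrArg Complex.re (congrArg (star v ⬝ᵥ ·) hv)
    simp only [Matrix.map_add _ (map_add _), add_mulVec, dotProduct_add, dotProduct_smul,
      smul_eq_mul, Complex.add_re, Complex.mul_re, ← hnorm_im, mul_zero, sub_zero] at h
    have := re_star_dotProduct_mulVec_self_eq_zero hZc v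
    simp only [RCLike.re_to_complex] at this
    linarith
  have hlow := hM.le_re_star_dotProduct_map_mulVec
    (fun i => ciInf_le (Set.finite_range _).bddBelow i) v
  have hhigh := hM.re_star_dotProduct_map_mulVec_le
    (fun i => le_ciSup (Set.finite_range _).bddAbove i) v
  simp only [RCLike.re_to_complex, hquad] at hlow hhigh
  exact ⟨le_of_mul_le_mul_right hlow hnorm_pos, le_of_mul_le_mul_right hhigh hnorm_pos⟩

theorem stmt13 {n : ℕ} (hn : 0 < n)
    (M Z : Matrix (Fin n) (Fin n) ℝ)
    (hM : M.IsHermitian) (hZ : Zᵀ = -Z) :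
    ∀ μ ∈ spectrum ℂ ((M + Z).map (algebraMap ℝ ℂ)),
      lamMin hM ≤ μ.re ∧ μ.re ≤ lamMax hM :=
  stmt13_general M Z hM hZ
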